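/- arXiv:2502.05464 — 3 statements merged into one kernel-verified Lean document; each statement's English description precedes it below -/
import Mathlib

section
/- Let ω > 0, Π = 2π/ω, a ≠ 0, H* ∈ ℝ, y* ∈ ℝ, D ≥ 0 and χ ∈ ℝ. Define S_D(t) = a·sin(ω(t+D)), N(t) = (16/a²)·(sin²(ωt) - 1/2), and y_c(t, χ) = y* + (H*/2)·(S_D(t - D) + χ)². Then (1/Π)·∫₀^Π N(s)·y_c(s, χ) ds = H*. -/
/-!
After the substitution `u = ω t` the delay cancels, `S_D(t - D) = a sin u`, and the period
average becomes an average over `[0, 2π]` of `(sin² u - 1/2)` times a quadratic polynomial in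
`sin u`. The demodulator `sin² u - 1/2` is orthogonal to `1` and to `sin u`, and its integral
against `sin² u` is `π/4`, so only the curvature term `H* a² sin² u / 2` survives; the gain
`16 / a²` normalises it to `H*`.
-/

open Real intervalIntegral

lemma integral_sin_sq_sub_half : ∫ u in (0 : ℝ)..2 * π, (sin u ^ 2 - 1 / 2) = 0 := by
  rw [integral_sub (Continuous.intervalIntegrable (by fun_prop) _ _)
    (Continuous.intervalIntegrable (by fun_prop) _ _), integral_sin_sq, integral_const]
  simp only [sin_zero, sin_two_pi, smul_eq_mul]
  ring

lemma integral_sin_sq_sub_half_mul_sin :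
    ∫ u in (0 : ℝ)..2 * π, (sin u ^ 2 - 1 / 2) * sin u = 0 := by
  have hexpand : ∀ u, (sin u ^ 2 - 1 / 2) * sin u = sin u ^ (1 + 2) - 1 / 2 * sin u :=
    fun u => by ring
  simp_rw [hexpand]
  rw [integral_sub (Continuous.intervalIntegrable (by fun_prop) _ _)
    (Continuous.intervalIntegrable (by fun_prop) _ _), integral_const_mul, integral_sin_pow,
    integral_sin]
  simp

lemma integral_sin_sq_sub_half_mul_sin_sq :
    ∫ u in (0 : ℝ)..2 * π, (sin u ^ 2 - 1 / 2) * sin u ^ 2 = π / 4 := by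
  have hexpand : ∀ u, (sin u ^ 2 - 1 / 2) * sin u ^ 2 = sin u ^ (2 + 2) - 1 / 2 * sin u ^ 2 :=
    fun u => by ring
  simp_rw [hexpand]
  rw [integral_sub (Continuous.intervalIntegrable (by fun_prop) _ _)
    (Continuous.intervalIntegrable (by fun_prop) _ _), integral_const_mul, integral_sin_pow,
    integral_sin_sq]
  simp only [sin_zero, sin_two_pi]
  ring

lemma integral_sin_sq_sub_half_mul_quadratic (c b A : ℝ) :
    ∫ u in (0 : ℝ)..2 * π, (sin u ^ 2 - 1 / 2) * (c + b * sin u + A * sin u ^ 2) = A * π / 4 := by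
  have hsplit : ∀ u, (sin u ^ 2 - 1 / 2) * (c + b * sin u + A * sin u ^ 2)
      = c * (sin u ^ 2 - 1 / 2) + b * ((sin u ^ 2 - 1 / 2) * sin u)
        + A * ((sin u ^ 2 - 1 / 2) * sin u ^ 2) := fun u => by ring
  simp_rw [hsplit]
  rw [integral_add (Continuous.intervalIntegrable (by fun_prop) _ _)
      (Continuous.intervalIntegrable (by fun_prop) _ _),
    integral_add (Continuous.intervalIntegrable (by fun_prop) _ _)
      (Continuous.intervalIntegrable (by fun_prop) _ _),
    integral_const_mul, integral_const_mul, integral_const_mul, integral_sin_sq_sub_half,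
    integral_sin_sq_sub_half_mul_sin, integral_sin_sq_sub_half_mul_sin_sq]
  ring

lemma average_comp_mul_left (f : ℝ → ℝ) (T : ℝ) {ω : ℝ} (hω : ω ≠ 0) :
    (1 / (T / ω)) * ∫ s in (0 : ℝ)..T / ω, f (ω * s) = (1 / T) * ∫ u in (0 : ℝ)..T, f u := by
  rw [integral_comp_mul_left f hω, mul_zero, mul_div_cancel₀ T hω, smul_eq_mul, ← mul_assoc,
    one_div_div, div_mul_eq_mul_div, mul_inv_cancel₀ hω]

theorem stmt_7_general (ω a Hstar ystar D χ : ℝ) (hω : 0 < ω) (ha : a ≠ 0)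
    (SD N : ℝ → ℝ) (yc : ℝ → ℝ → ℝ)
    (hS : ∀ t, SD t = a * Real.sin (ω * (t + D)))
    (hN : ∀ t, N t = (16 / a ^ 2) * (Real.sin (ω * t) ^ 2 - 1 / 2))
    (hy : ∀ t c, yc t c = ystar + Hstar / 2 * (SD (t - D) + c) ^ 2) :
    (1 / (2 * Real.pi / ω)) * ∫ s in (0 : ℝ)..(2 * Real.pi / ω), N s * yc s χ
      = Hstar := by
  set demodulated : ℝ → ℝ := fun u => 16 / a ^ 2 * ((sin u ^ 2 - 1 / 2) *
    ((ystar + Hstar / 2 * χ ^ 2) + Hstar * a * χ * sin u + Hstar / 2 * a ^ 2 * sin u ^ 2))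
  have hintegrand : ∀ s, N s * yc s χ = demodulated (ω * s) := fun s => by
    simp only [demodulated, hN, hy, hS, sub_add_cancel]
    ring
  simp_rw [hintegrand]
  rw [average_comp_mul_left demodulated _ hω.ne', integral_const_mul,
    integral_sin_sq_sub_half_mul_quadratic]
  field_simp
  ring

theorem stmt_7 (ω a Hstar ystar D χ : ℝ) (hω : 0 < ω) (ha : a ≠ 0) (hD : 0 ≤ D)
    (SD N : ℝ → ℝ) (yc : ℝ → ℝ → ℝ)
    (hS : ∀ t, SD t = a * Real.sin (ω * (t + D)))
    (hN : ∀ t, N t = (16 / a ^ 2) * (Real.sin (ω * t) ^ 2 - 1 / 2))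
    (hy : ∀ t c, yc t c = ystar + Hstar / 2 * (SD (t - D) + c) ^ 2) :
    (1 / (2 * Real.pi / ω)) * ∫ s in (0 : ℝ)..(2 * Real.pi / ω), N s * yc s χ
      = Hstar :=
  stmt_7_general ω a Hstar ystar D χ hω ha SD N yc hS hN hy
end

section
/- Let T > 0, δ ∈ (-1, 1], t̄_n = 2Tn - δT, and let K_T be as in the unit-mass property with ∫_{t̄_n+T}^{t̄_{n+1}} K_T = 1 and 0 ≤ K_T(t) ≤ 2/T. Suppose x is continuous and solves ẋ(t) = -K_T(t)·x(t-T) + v(t) on [t̄_n, t̄_{n+1}] with v continuous. Then for all t ∈ [t̄_n + T, t̄_{n+1}], x(t) = x(t̄_n)·(1 - ∫_{t̄_n+T}^t K_T(τ)dτ) + ∫_{t̄_n}^t v(τ)dτ - ∫_{t̄_n+T}^t K_T(τ)·(∫_{t̄_n}^{τ-T} v(s)ds)dτ, and in particular |x(t̄_{n+1})| ≤ 3T·sup_{t̄_n ≤ τ ≤ t̄_{n+1}} |v(τ)|. -/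
/-!
The kernel `K` vanishes on the first half `[t̄ₙ, t̄ₙ + T]` of the period, so there `x` is just
`x(t̄ₙ)` plus a primitive of `v`. On the second half the delayed value `x(τ - T)` therefore comes
from the first half, and integrating the equation once more gives the representation formula. At
`t̄ₙ₊₁` the unit mass of `K` kills the coefficient of `x(t̄ₙ)`, and the two remaining integrals are
bounded by `2T · sup |v|` and `T · sup |v|`.
-/

open Real Set

noncomputable def pulse (T s : ℝ) : ℝ :=
  2 / T * max 0 (-sin (π / T * s) * |sin (π / T * s)|)

lemma continuous_pulse (T : ℝ) : Continuous (pulse T) := by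
  unfold pulse
  fun_prop

lemma pulse_nonneg {T : ℝ} (hT : 0 ≤ T) (s : ℝ) : 0 ≤ pulse T s :=
  mul_nonneg (by positivity) (le_max_left _ _)

lemma pulse_periodic {T : ℝ} (hT : T ≠ 0) : Function.Periodic (pulse T) (2 * T) := by
  intro s
  have : π / T * (s + 2 * T) = π / T * s + 2 * π := by field_simp
  simp only [pulse, this, sin_add_two_pi]

lemma pulse_eq_zero_of_mem_Icc {T s : ℝ} (hT : 0 < T) (hs : s ∈ Icc 0 T) : pulse T s = 0 := by
  have hsin : 0 ≤ sin (π / T * s) := by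
    apply sin_nonneg_of_nonneg_of_le_pi (mul_nonneg (div_pos pi_pos hT).le hs.1)
    calc π / T * s ≤ π / T * T := by gcongr; exact hs.2
      _ = π := by field_simp
  rw [pulse, abs_of_nonneg hsin, max_eq_left (by nlinarith), mul_zero]

lemma pulse_eq_sin_sq_of_mem_Icc {T s : ℝ} (hT : 0 < T) (hs : s ∈ Icc T (2 * T)) :
    pulse T s = 2 / T * sin (π / T * s) ^ 2 := by
  have hsin : sin (π / T * s) ≤ 0 := by
    rw [← sin_sub_two_pi]
    have h₁ : π / T * T ≤ π / T * s := by gcongr; exact hs.1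
    have h₂ : π / T * s ≤ π / T * (2 * T) := by gcongr; exact hs.2
    rw [div_mul_cancel₀ _ hT.ne'] at h₁
    rw [show π / T * (2 * T) = 2 * π by field_simp] at h₂
    apply sin_nonpos_of_nonpos_of_neg_pi_le <;> linarith
  rw [pulse, abs_of_nonpos hsin, max_eq_right (by nlinarith)]
  ring

lemma integral_pulse {T : ℝ} (hT : 0 < T) : ∫ s in T..2 * T, pulse T s = 1 := by
  have hc : π / T ≠ 0 := (div_pos pi_pos hT).ne'
  rw [intervalIntegral.integral_congr (g := fun s => 2 / T * sin (π / T * s) ^ 2)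
      fun s hs => pulse_eq_sin_sq_of_mem_Icc hT (by rwa [uIcc_of_le (by linarith)] at hs),
    intervalIntegral.integral_const_mul,
    intervalIntegral.integral_comp_mul_left (fun y => sin y ^ 2) hc, integral_sin_sq]
  have h₁ : π / T * T = π := by field_simp
  have h₂ : π / T * (2 * T) = 2 * π := by field_simp
  rw [h₁, h₂, sin_pi, sin_two_pi, smul_eq_mul]
  field_simp
  ring

lemma abs_intervalIntegral_le_of_abs_le {f : ℝ → ℝ} {a b M : ℝ} (hab : a ≤ b)
    (hf : ∀ x ∈ Icc a b, |f x| ≤ M) : |∫ x in a..b, f x| ≤ M * (b - a) := by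
  rw [← abs_of_nonneg (sub_nonneg.2 hab)]
  exact intervalIntegral.norm_integral_le_of_norm_le_const (f := f) (C := M)
      fun x hx => hf x (Ioc_subset_Icc_self (by rwa [uIoc_of_le hab] at hx))

section DelayEquation

variable {K x v : ℝ → ℝ} {a T : ℝ}

lemma eq_add_integral_of_hasDerivAt_delay (hK0 : ∀ t ∈ Icc a (a + T), K t = 0)
    (hv : Continuous v)
    (hode : ∀ t ∈ Icc a (a + T), HasDerivAt x (-(K t) * x (t - T) + v t) t)
    {t : ℝ} (ht : t ∈ Icc a (a + T)) :
    x t = x a + ∫ τ in a..t, v τ := by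
  have hsub : Icc a t ⊆ Icc a (a + T) := Icc_subset_Icc_right ht.2
  rw [intervalIntegral.integral_eq_sub_of_hasDerivAt (f := x) (fun τ hτ => ?_)
    (hv.intervalIntegrable _ _)]
  · ring
  rw [uIcc_of_le ht.1] at hτ
  simpa [hK0 τ (hsub hτ)] using hode τ (hsub hτ)

theorem eq_sub_integral_kernel_of_hasDerivAt_delay (hT : 0 ≤ T) (hK : Continuous K)
    (hK0 : ∀ t ∈ Icc a (a + T), K t = 0) (hx : Continuous x) (hv : Continuous v)
    (hode : ∀ t ∈ Icc a (a + 2 * T), HasDerivAt x (-(K t) * x (t - T) + v t) t) :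
    ∀ t ∈ Icc (a + T) (a + 2 * T),
      x t = x a * (1 - ∫ τ in (a + T)..t, K τ) + (∫ τ in a..t, v τ)
        - ∫ τ in (a + T)..t, K τ * ∫ s in a..(τ - T), v s := by
  intro t ht
  have hfirst : ∀ s ∈ Icc a (a + T), x s = x a + ∫ τ in a..s, v τ :=
    fun s hs => eq_add_integral_of_hasDerivAt_delay hK0 hv
      (fun τ hτ => hode τ ⟨hτ.1, by linarith [hτ.2]⟩) hs
  have hprimitive : Continuous fun b => ∫ s in a..b, v s :=
    intervalIntegral.continuous_primitive (fun _ _ => hv.intervalIntegrable _ _) a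
  have hsecond : x t - x (a + T)
      = ∫ τ in (a + T)..t, (-(x a) * K τ - K τ * ∫ s in a..(τ - T), v s) + v τ := by
    have hftc : ∫ τ in (a + T)..t, -(K τ) * x (τ - T) + v τ = x t - x (a + T) := by
      refine intervalIntegral.integral_eq_sub_of_hasDerivAt (fun τ hτ => ?_)
        (Continuous.intervalIntegrable (by fun_prop) _ _)
      rw [uIcc_of_le ht.1] at hτ
      exact hode τ ⟨by linarith [hτ.1], hτ.2.trans ht.2⟩
    rw [← hftc]
    refine intervalIntegral.integral_congr fun τ hτ => ?_
    rw [uIcc_of_le ht.1] at hτ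
    rw [hfirst (τ - T) ⟨by linarith [hτ.1], by linarith [hτ.2, ht.2]⟩]
    ring
  rw [intervalIntegral.integral_add ?_ (hv.intervalIntegrable _ _),
    intervalIntegral.integral_sub ?_ ?_, intervalIntegral.integral_const_mul] at hsecond
  · rw [← intervalIntegral.integral_add_adjacent_intervals (b := a + T)
      (hv.intervalIntegrable _ _) (hv.intervalIntegrable _ _)]
    linear_combination hsecond + hfirst (a + T) ⟨by linarith, le_rfl⟩
  all_goals exact Continuous.intervalIntegrable (by fun_prop) _ _

lemma abs_integral_sub_integral_mul_le (hT : 0 ≤ T) (hK : Continuous K)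
    (hK_nonneg : ∀ τ ∈ Icc (a + T) (a + 2 * T), 0 ≤ K τ)
    (hK_mass : ∫ τ in (a + T)..(a + 2 * T), K τ = 1)
    {M : ℝ} (hM : ∀ τ ∈ Icc a (a + 2 * T), |v τ| ≤ M) :
    |(∫ τ in a..(a + 2 * T), v τ) - ∫ τ in (a + T)..(a + 2 * T), K τ * ∫ s in a..(τ - T), v s|
      ≤ 3 * T * M := by
  have hM0 : 0 ≤ M := (abs_nonneg _).trans (hM a ⟨le_rfl, by linarith⟩)
  have hdirect : |∫ τ in a..(a + 2 * T), v τ| ≤ M * (2 * T) := by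
    simpa using abs_intervalIntegral_le_of_abs_le (by linarith) hM
  have hdelayed : |∫ τ in (a + T)..(a + 2 * T), K τ * ∫ s in a..(τ - T), v s| ≤ M * T := by
    calc _ ≤ ∫ τ in (a + T)..(a + 2 * T), K τ * (M * T) := by
          rw [← Real.norm_eq_abs]
          refine intervalIntegral.norm_integral_le_of_norm_le (by linarith)
            (Filter.Eventually.of_forall fun τ hτ => ?_)
            ((hK.mul continuous_const).intervalIntegrable _ _)
          have hτ' : τ ∈ Icc (a + T) (a + 2 * T) := Ioc_subset_Icc_self hτ
          rw [Real.norm_eq_abs, abs_mul, abs_of_nonneg (hK_nonneg τ hτ')]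
          gcongr
          · exact hK_nonneg τ hτ'
          calc _ ≤ M * (τ - T - a) := abs_intervalIntegral_le_of_abs_le
                (by linarith [hτ'.1]) fun s hs => hM s ⟨hs.1, by linarith [hs.2, hτ'.2]⟩
            _ ≤ M * T := by gcongr; linarith [hτ'.2]
      _ = M * T := by rw [intervalIntegral.integral_mul_const, hK_mass, one_mul]
  calc _ ≤ _ := abs_sub _ _
    _ ≤ M * (2 * T) + M * T := add_le_add hdirect hdelayed
    _ = 3 * T * M := by ring

end DelayEquation

theorem stmt_11_general (T δ : ℝ) (hT : 0 < T) (n : ℕ)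
    (K x v : ℝ → ℝ)
    (hK : ∀ t, K t = (2 / T) * max 0
      (-(Real.sin ((Real.pi / T) * (t + δ * T)))
        * |Real.sin ((Real.pi / T) * (t + δ * T))|))
    (hx : Continuous x) (hv : Continuous v)
    (hode : ∀ t ∈ Icc (2 * T * n - δ * T) (2 * T * (n + 1) - δ * T),
      HasDerivAt x (-(K t) * x (t - T) + v t) t) :
    (∀ t ∈ Icc ((2 * T * n - δ * T) + T) (2 * T * (n + 1) - δ * T),
      x t = x (2 * T * n - δ * T) * (1 - ∫ τ in ((2 * T * n - δ * T) + T)..t, K τ)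
        + (∫ τ in (2 * T * n - δ * T)..t, v τ)
        - ∫ τ in ((2 * T * n - δ * T) + T)..t,
            K τ * ∫ s in (2 * T * n - δ * T)..(τ - T), v s) ∧
    |x (2 * T * (n + 1) - δ * T)|
      ≤ 3 * T * sSup ((fun τ => |v τ|) ''
          Icc (2 * T * n - δ * T) (2 * T * (n + 1) - δ * T)) := by
  set a := 2 * T * n - δ * T with ha
  rw [show 2 * T * (n + 1) - δ * T = a + 2 * T by ring] at hode ⊢
  have hKa : K = fun t => pulse T (t - a) := funext fun t => by
    rw [hK, ← (pulse_periodic hT.ne').nat_mul n (t - a), ha]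
    exact congrArg (pulse T) (by ring)
  have hKc : Continuous K := hKa ▸ (continuous_pulse T).comp (continuous_sub_right a)
  have hK0 : ∀ t ∈ Icc a (a + T), K t = 0 := fun t ht => by
    rw [hKa]
    exact pulse_eq_zero_of_mem_Icc hT ⟨by linarith [ht.1], by linarith [ht.2]⟩
  have hmass : ∫ τ in (a + T)..(a + 2 * T), K τ = 1 := by
    rw [hKa, intervalIntegral.integral_comp_sub_right (pulse T), add_sub_cancel_left,
      add_sub_cancel_left]
    exact integral_pulse hT
  have hrep := eq_sub_integral_kernel_of_hasDerivAt_delay hT.le hKc hK0 hx hv hode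
  refine ⟨hrep, ?_⟩
  rw [hrep _ ⟨by linarith, le_rfl⟩, hmass, sub_self, mul_zero, zero_add]
  exact abs_integral_sub_integral_mul_le hT.le hKc (fun τ _ => hKa ▸ pulse_nonneg hT.le _) hmass
    fun τ hτ => le_csSup (isCompact_Icc.image (by fun_prop)).bddAbove ⟨τ, hτ, rfl⟩

theorem stmt_11 (T δ : ℝ) (hT : 0 < T) (hδ : δ ∈ Set.Ioc (-1 : ℝ) 1) (n : ℕ)
    (K x v : ℝ → ℝ)
    (hK : ∀ t, K t = (2 / T) * max 0
      (-(Real.sin ((Real.pi / T) * (t + δ * T)))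
        * |Real.sin ((Real.pi / T) * (t + δ * T))|))
    (hx : Continuous x) (hv : Continuous v)
    (hode : ∀ t ∈ Icc (2 * T * n - δ * T) (2 * T * (n + 1) - δ * T),
      HasDerivAt x (-(K t) * x (t - T) + v t) t) :
    (∀ t ∈ Icc ((2 * T * n - δ * T) + T) (2 * T * (n + 1) - δ * T),
      x t = x (2 * T * n - δ * T) * (1 - ∫ τ in ((2 * T * n - δ * T) + T)..t, K τ)
        + (∫ τ in (2 * T * n - δ * T)..t, v τ)
        - ∫ τ in ((2 * T * n - δ * T) + T)..t,
            K τ * ∫ s in (2 * T * n - δ * T)..(τ - T), v s) ∧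
    |x (2 * T * (n + 1) - δ * T)|
      ≤ 3 * T * sSup ((fun τ => |v τ|) ''
          Icc (2 * T * n - δ * T) (2 * T * (n + 1) - δ * T)) :=
  stmt_11_general T δ hT n K x v hK hx hv hode
end

section
/- Let T > 0, δ ∈ (-1, 1], and K_T be the 2T-periodic pulse gain with support where sin((π/T)(t+δT)) ≤ 0, satisfying 0 ≤ K_T ≤ 2/T and unit mass per active half-period. Suppose x solves ẋ(t) = -K_T(t)·x(t-T) + v(t) with continuous v such that v(t) = 0 for all t ≥ t', where t' > 0. Then x(t) = 0 for all t ≥ 2T - δT + 2T·⌈(t' + δT)/(2T)⌉. -/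
/-!
Let `a = 2Tm - δT` with `m = ⌈(t' + δT)/(2T)⌉`, the first time after `t'` at which an idle
half-period of the gain begins. On `[a, a + T]` both the gain and the input vanish, so `x` is
frozen at `c = x a`. On the active half-period `[a + T, a + 2T]` the delayed state is this
constant `c`, so `x` drops by `c ∫ K = c` and reaches `0` at `a + 2T`. Afterwards the gain is
either idle or acts on a delayed state that is already zero, so `x` stays at zero.
-/

open Real Set

/-- The paper's gain `K_T` is `pulseGain T (-δT)`; the phase `a` is chosen so that the gain is
idle on `[a + 2kT, a + (2k+1)T]`. -/
noncomputable def pulseGain (T a t : ℝ) : ℝ :=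
  2 / T * max 0 (-sin (π / T * (t - a)) * |sin (π / T * (t - a))|)

theorem eq_left_of_hasDerivAt_zero {f : ℝ → ℝ} {a b : ℝ}
    (h : ∀ t ∈ Icc a b, HasDerivAt f 0 t) : ∀ t ∈ Icc a b, f t = f a :=
  constant_of_has_deriv_right_zero (fun t ht => (h t ht).continuousAt.continuousWithinAt)
    fun t ht => (h t (Ico_subset_Icc_self ht)).hasDerivWithinAt

section PulseGain

variable {T a t : ℝ}

theorem continuous_pulseGain (T a : ℝ) : Continuous (pulseGain T a) := by
  unfold pulseGain
  fun_prop

theorem pulseGain_add_int_mul (hT : T ≠ 0) (m : ℤ) :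
    pulseGain T (a + 2 * T * m) = pulseGain T a := by
  funext t
  have hshift : π / T * (t - (a + 2 * T * m)) = π / T * (t - a) + (-m : ℤ) * (2 * π) := by
    push_cast
    field_simp
    ring
  rw [pulseGain, pulseGain, hshift, sin_add_int_mul_two_pi]

theorem pulseGain_eq_zero_of_sin_nonneg (h : 0 ≤ sin (π / T * (t - a))) :
    pulseGain T a t = 0 := by
  rw [pulseGain, abs_of_nonneg h, max_eq_left (by nlinarith), mul_zero]

theorem pulseGain_eq_of_sin_nonpos (h : sin (π / T * (t - a)) ≤ 0) :
    pulseGain T a t = 2 / T * sin (π / T * (t - a)) ^ 2 := by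
  rw [pulseGain, abs_of_nonpos h, max_eq_right (by nlinarith)]
  ring

theorem pulseGain_eq_zero_of_mem_Icc (hT : 0 < T) (ht : t ∈ Icc a (a + T)) :
    pulseGain T a t = 0 := by
  refine pulseGain_eq_zero_of_sin_nonneg (sin_nonneg_of_nonneg_of_le_pi ?_ ?_)
  · exact mul_nonneg (by positivity) (by linarith [ht.1])
  · calc π / T * (t - a) ≤ π / T * T := by gcongr; linarith [ht.2]
      _ = π := div_mul_cancel₀ _ hT.ne'

theorem sin_nonpos_of_mem_Icc_add (hT : 0 < T) (ht : t ∈ Icc (a + T) (a + 2 * T)) :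
    sin (π / T * (t - a)) ≤ 0 := by
  have hscale : π / T * (t - a) - 2 * π = π / T * (t - (a + 2 * T)) := by
    field_simp
    ring
  rw [← sin_sub_two_pi, hscale]
  apply sin_nonpos_of_nonpos_of_neg_pi_le
  · exact mul_nonpos_of_nonneg_of_nonpos (by positivity) (by linarith [ht.2])
  · calc -π = π / T * (-T) := by field_simp
      _ ≤ π / T * (t - (a + 2 * T)) := by gcongr; linarith [ht.1]

theorem integral_pulseGain (hT : 0 < T) : ∫ t in (a + T)..(a + 2 * T), pulseGain T a t = 1 := by
  have hc : π / T ≠ 0 := by positivity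
  calc ∫ t in (a + T)..(a + 2 * T), pulseGain T a t
      = ∫ t in (a + T)..(a + 2 * T), 2 / T * sin (π / T * t - π / T * a) ^ 2 := by
        refine intervalIntegral.integral_congr fun t ht => ?_
        rw [uIcc_of_le (by linarith)] at ht
        rw [pulseGain_eq_of_sin_nonpos (sin_nonpos_of_mem_Icc_add hT ht), mul_sub]
    _ = 2 / T * ((π / T)⁻¹ * ∫ u in π..2 * π, sin u ^ 2) := by
        rw [intervalIntegral.integral_const_mul,
          intervalIntegral.integral_comp_mul_sub (fun u => sin u ^ 2) hc, smul_eq_mul]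
        congr 3 <;> field_simp <;> ring
    _ = 1 := by
        rw [integral_sin_sq]
        simp only [sin_pi, sin_two_pi, zero_mul, sub_zero]
        field_simp
        ring

end PulseGain

theorem eq_zero_of_hasDerivAt_delay {x g : ℝ → ℝ} {b T : ℝ} (hT : 0 < T) (hb : x b = 0)
    (hderiv : ∀ s ≥ b, HasDerivAt x (g s * x (s - T)) s)
    (hg : ∀ s ∈ Icc b (b + T), g s = 0) :
    ∀ s ≥ b, x s = 0 := by
  have hstep : ∀ k : ℕ, ∀ s ∈ Icc b (b + k * T), x s = 0 := by
    intro k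
    induction k with
    | zero =>
      intro s hs
      simp only [CharP.cast_eq_zero, zero_mul, add_zero] at hs
      rw [le_antisymm hs.2 hs.1, hb]
    | succ k ih =>
      have hkT : 0 ≤ (k : ℝ) * T := by positivity
      have hflat : ∀ s ∈ Icc (b + k * T) (b + (k + 1) * T), HasDerivAt x 0 s := by
        intro s hs
        have hs' := hderiv s (by linarith [hs.1])
        by_cases hsT : s ≤ b + T
        · rwa [hg s ⟨by linarith [hs.1], hsT⟩, zero_mul] at hs'
        · rwa [ih (s - T) ⟨by linarith, by linarith [hs.2]⟩, mul_zero] at hs'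
      intro s hs
      push_cast at hs
      rcases le_total s (b + k * T) with hsk | hsk
      · exact ih s ⟨hs.1, hsk⟩
      · rw [eq_left_of_hasDerivAt_zero hflat s ⟨hsk, hs.2⟩, ih _ ⟨by linarith, le_rfl⟩]
  intro s hs
  obtain ⟨k, hk⟩ := exists_nat_ge ((s - b) / T)
  rw [div_le_iff₀ hT] at hk
  exact hstep k s ⟨hs, by linarith⟩

theorem eq_zero_of_hasDerivAt_pulseGain_delay {x : ℝ → ℝ} {T a : ℝ} (hT : 0 < T)
    (hode : ∀ s ≥ a, HasDerivAt x (-pulseGain T a s * x (s - T)) s) :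
    ∀ s ≥ a + 2 * T, x s = 0 := by
  have hidle : ∀ s ∈ Icc a (a + T), x s = x a := eq_left_of_hasDerivAt_zero fun s hs => by
    simpa [pulseGain_eq_zero_of_mem_Icc hT hs] using hode s hs.1
  have hkick : x (a + 2 * T) = 0 := by
    have hftc := intervalIntegral.integral_eq_sub_of_hasDerivAt
      (a := a + T) (b := a + 2 * T) (f' := fun s => -pulseGain T a s * x a) (fun s hs => by
        rw [uIcc_of_le (by linarith)] at hs
        rw [← hidle (s - T) ⟨by linarith [hs.1], by linarith [hs.2]⟩]
        exact hode s (by linarith [hs.1]))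
      (((continuous_pulseGain T a).neg.mul continuous_const).intervalIntegrable _ _)
    rw [intervalIntegral.integral_mul_const, intervalIntegral.integral_neg, integral_pulseGain hT,
      hidle (a + T) ⟨by linarith, le_rfl⟩] at hftc
    linarith
  refine eq_zero_of_hasDerivAt_delay hT hkick (fun s hs => hode s (by linarith)) fun s hs => ?_
  have hperiod := pulseGain_add_int_mul (a := a) hT.ne' 1
  rw [Int.cast_one, mul_one] at hperiod
  rw [← hperiod, pulseGain_eq_zero_of_mem_Icc hT hs, neg_zero]

theorem stmt_18_general (T δ t' : ℝ) (hT : 0 < T)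
    (ht' : 0 < t')
    (K x v : ℝ → ℝ)
    (hK : ∀ t, K t = (2 / T) * max 0
      (-(Real.sin ((Real.pi / T) * (t + δ * T)))
        * |Real.sin ((Real.pi / T) * (t + δ * T))|))
    (hvz : ∀ t ≥ t', v t = 0)
    (hode : ∀ t ≥ (0 : ℝ), HasDerivAt x (-(K t) * x (t - T) + v t) t) :
    ∀ t ≥ 2 * T - δ * T + 2 * T * (⌈(t' + δ * T) / (2 * T)⌉ : ℝ), x t = 0 := by
  set m := ⌈(t' + δ * T) / (2 * T)⌉
  have hat' : t' ≤ 2 * T * m - δ * T := by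
    have hm := Int.le_ceil ((t' + δ * T) / (2 * T))
    rw [div_le_iff₀ (by positivity)] at hm
    linarith
  have hKa : K = pulseGain T (2 * T * m - δ * T) := by
    funext t
    rw [hK, sub_eq_neg_add, pulseGain_add_int_mul hT.ne', pulseGain, sub_neg_eq_add]
  have hzero := eq_zero_of_hasDerivAt_pulseGain_delay hT fun s hs => by
    simpa [hKa, hvz s (hat'.trans hs)] using hode s (by linarith)
  intro t ht
  exact hzero t (by linarith)

theorem stmt_18 (T δ t' : ℝ) (hT : 0 < T) (hδ : δ ∈ Set.Ioc (-1 : ℝ) 1)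
    (ht' : 0 < t')
    (K x v : ℝ → ℝ)
    (hK : ∀ t, K t = (2 / T) * max 0
      (-(Real.sin ((Real.pi / T) * (t + δ * T)))
        * |Real.sin ((Real.pi / T) * (t + δ * T))|))
    (hx : Continuous x) (hv : Continuous v)
    (hvz : ∀ t ≥ t', v t = 0)
    (hode : ∀ t ≥ (0 : ℝ), HasDerivAt x (-(K t) * x (t - T) + v t) t) :
    ∀ t ≥ 2 * T - δ * T + 2 * T * (⌈(t' + δ * T) / (2 * T)⌉ : ℝ), x t = 0 :=
  stmt_18_general T δ t' hT ht' K x v hK hvz hode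
end
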